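/- arXiv:1705.03870 — 2 statements merged into one kernel-verified Lean document; each statement's English description precedes it below -/
import Mathlib

section
/- Let d be a positive integer, let Ω ⊂ ℝ^d be a measurable set, and let Ω^s ⊆ Ω and Ω_X ⊆ Ω be measurable subsets. Let u : ℝ^d → ℝ^d be twice continuously differentiable with compact support contained in the interior of Ω. Let α ≥ 0, β ≥ 0, γ ≥ 0, ν^δ ≥ 0, ν^f > 0, and suppose u satisfies the Poincaré inequality ∫_Ω |u|² ≤ C_Ω² ∫_Ω ‖∇u‖² for some constant C_Ω > 0. Then a(u,u) := α∫_Ω |u|² + (ν^f/2)∫_Ω ‖Du‖² + β∫_{Ω^s} |u|² + (ν^δ/2)∫_{Ω^s} ‖Du‖² + γ∫_{Ω_X} ‖∇u‖² ≥ (ν^f/(C_Ω² + 1)) ‖u‖_{1,Ω}², where ‖u‖_{1,Ω}² = ∫_Ω |u|² + ∫_Ω ‖∇u‖². -/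
open MeasureTheory

namespace Stmt7Aux

variable {d : ℕ}

noncomputable def F (u : (Fin d → ℝ) → (Fin d → ℝ)) (i j : Fin d) (x : Fin d → ℝ) : ℝ :=
  fderiv ℝ u x (Pi.single i 1) j

set_option maxHeartbeats 2000000 in
lemma korn (u : (Fin d → ℝ) → (Fin d → ℝ))
    (hu : ContDiff ℝ 2 u) (hs : HasCompactSupport u) :
    0 ≤ ∫ x, ∑ i : Fin d, ∑ j : Fin d, F u i j x * F u j i x := by
  classical
  have hdiff : Differentiable ℝ u := hu.differentiable (by norm_num)
  have hfd : ContDiff ℝ 1 (fderiv ℝ u) := hu.fderiv_right (by norm_num)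
  have hfdiff : Differentiable ℝ (fderiv ℝ u) := hfd.differentiable one_ne_zero
  have hH : Continuous (fderiv ℝ (fderiv ℝ u)) := hfd.continuous_fderiv one_ne_zero
  have hHsupp : HasCompactSupport (fderiv ℝ (fderiv ℝ u)) := (hs.fderiv ℝ).fderiv ℝ
  -- continuity / support of the first derivatives
  have hFcont : ∀ i j, Continuous (F u i j) := fun i j =>
    (continuous_apply j).comp
      ((ContinuousLinearMap.apply ℝ (Fin d → ℝ) (Pi.single i 1)).continuous.comp hfd.continuous)
  have hFsupp : ∀ i j, HasCompactSupport (F u i j) := by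
    intro i j
    apply (hs.fderiv ℝ).mono'
    intro x hx
    apply subset_closure
    simp only [Function.mem_support]
    intro h0
    apply hx
    simp [F, h0]
  -- continuity / support of evaluated second derivatives
  have hHcont : ∀ (v w : Fin d → ℝ) (k : Fin d),
      Continuous fun x => fderiv ℝ (fderiv ℝ u) x v w k := by
    intro v w k
    exact (continuous_apply k).comp
      ((ContinuousLinearMap.apply ℝ (Fin d → ℝ) w).continuous.comp
        ((ContinuousLinearMap.apply ℝ ((Fin d → ℝ) →L[ℝ] (Fin d → ℝ)) v).continuous.comp hH))
  have hHsupp' : ∀ (v w : Fin d → ℝ) (k : Fin d),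
      HasCompactSupport fun x => fderiv ℝ (fderiv ℝ u) x v w k := by
    intro v w k
    apply hHsupp.mono'
    intro x hx
    apply subset_closure
    simp only [Function.mem_support]
    intro h0
    apply hx
    simp [h0]
  -- components of u
  have hucont : ∀ i, Continuous fun x => u x i := fun i =>
    (continuous_apply i).comp hu.continuous
  have husupp : ∀ i, HasCompactSupport fun x => u x i := by
    intro i
    apply hs.mono'
    intro x hx
    apply subset_closure
    simp only [Function.mem_support]
    intro h0
    apply hx
    simp [h0]
  have hudiff : ∀ i, Differentiable ℝ fun x => u x i := by
    intro i x
    have h := (((ContinuousLinearMap.proj (R := ℝ) (φ := fun _ : Fin d => ℝ) i).hasFDerivAt).comp x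
      (hdiff x).hasFDerivAt).differentiableAt
    exact h
  have hucomp : ∀ (i : Fin d) (x : Fin d → ℝ) (v : Fin d → ℝ),
      fderiv ℝ (fun y => u y i) x v = fderiv ℝ u x v i := by
    intro i x v
    have := (((ContinuousLinearMap.proj (R := ℝ) (φ := fun _ : Fin d => ℝ) i).hasFDerivAt).comp x
      (hdiff x).hasFDerivAt).fderiv
    have h2 : fderiv ℝ (fun y => u y i) x
        = (ContinuousLinearMap.proj i).comp (fderiv ℝ u x) := by
      exact this
    rw [h2]; rfl
  -- derivative of F u i j
  let P : Fin d → Fin d → (((Fin d → ℝ) →L[ℝ] (Fin d → ℝ)) →L[ℝ] ℝ) := fun i j =>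
    (ContinuousLinearMap.proj j).comp (ContinuousLinearMap.apply ℝ (Fin d → ℝ) (Pi.single i 1))
  have hFfd : ∀ (i j : Fin d) (x : Fin d → ℝ),
      HasFDerivAt (F u i j) ((P i j).comp (fderiv ℝ (fderiv ℝ u) x)) x := by
    intro i j x
    exact ((P i j).hasFDerivAt).comp x (hfdiff x).hasFDerivAt
  have hFdiff : ∀ i j, Differentiable ℝ (F u i j) := fun i j x => (hFfd i j x).differentiableAt
  have hFfderiv : ∀ (i j : Fin d) (x : Fin d → ℝ) (v : Fin d → ℝ),
      fderiv ℝ (F u i j) x v = fderiv ℝ (fderiv ℝ u) x v (Pi.single i 1) j := by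
    intro i j x v
    rw [(hFfd i j x).fderiv]; rfl
  -- symmetry of the second derivative
  have hsymm : ∀ (x v w : Fin d → ℝ),
      fderiv ℝ (fderiv ℝ u) x v w = fderiv ℝ (fderiv ℝ u) x w v := by
    intro x v w
    exact (hu.contDiffAt.isSymmSndFDerivAt (by simp)) v w
  -- first integration by parts
  have key : ∀ i j : Fin d, (∫ x, F u i j x * F u j i x)
      = - ∫ x, fderiv ℝ (fderiv ℝ u) x (Pi.single i 1) (Pi.single j 1) j * u x i := by
    intro i j
    have h1 : Integrable (fun x => fderiv ℝ (F u i j) x (Pi.single j 1) * u x i) := by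
      have heq : (fun x => fderiv ℝ (F u i j) x (Pi.single j 1) * u x i)
          = fun x => fderiv ℝ (fderiv ℝ u) x (Pi.single j 1) (Pi.single i 1) j * u x i := by
        funext x; rw [hFfderiv]
      rw [heq]
      exact ((hHcont (Pi.single j 1) (Pi.single i 1) j).mul (hucont i)).integrable_of_hasCompactSupport
        ((hHsupp' (Pi.single j 1) (Pi.single i 1) j).mul_right)
    have h2 : Integrable (fun x => F u i j x * fderiv ℝ (fun y => u y i) x (Pi.single j 1)) := by
      have hc : Continuous fun x => F u i j x * fderiv ℝ (fun y => u y i) x (Pi.single j 1) := by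
        simp only [hucomp]
        exact (hFcont i j).mul (hFcont j i)
      exact hc.integrable_of_hasCompactSupport ((hFsupp i j).mul_right)
    have h3 : Integrable (fun x => F u i j x * u x i) :=
      ((hFcont i j).mul (hucont i)).integrable_of_hasCompactSupport ((hFsupp i j).mul_right)
    have h := integral_mul_fderiv_eq_neg_fderiv_mul_of_integrable
      (f := F u i j) (g := fun y => u y i) (v := Pi.single j 1) ?_ h2 h3 (fun x _ => hFdiff i j x) (fun x _ => hudiff i x)
    · have hl : (fun x => F u i j x * fderiv ℝ (fun y => u y i) x (Pi.single j 1))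
          = fun x => F u i j x * F u j i x := by
        funext x; rw [hucomp]; rfl
      have hr : (fun x => fderiv ℝ (F u i j) x (Pi.single j 1) * u x i)
          = fun x => fderiv ℝ (fderiv ℝ u) x (Pi.single i 1) (Pi.single j 1) j * u x i := by
        funext x; rw [hFfderiv, hsymm]
      rw [hl, hr] at h
      exact h
    · exact h1
  -- the divergence g
  have hgfd : ∀ x : Fin d → ℝ, HasFDerivAt (fun x => ∑ j : Fin d, F u j j x)
      (∑ j : Fin d, (P j j).comp (fderiv ℝ (fderiv ℝ u) x)) x := by
    intro x
    exact HasFDerivAt.fun_sum (fun j _ => hFfd j j x)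
  have hgdiff : Differentiable ℝ (fun x => ∑ j : Fin d, F u j j x) :=
    fun x => (hgfd x).differentiableAt
  have hgfderiv : ∀ (x : Fin d → ℝ) (v : Fin d → ℝ),
      fderiv ℝ (fun x => ∑ j : Fin d, F u j j x) x v
        = ∑ j : Fin d, fderiv ℝ (fderiv ℝ u) x v (Pi.single j 1) j := by
    intro x v
    rw [(hgfd x).fderiv]
    simp [P]
  have hgcont : Continuous (fun x => ∑ j : Fin d, F u j j x) :=
    continuous_finset_sum _ fun j _ => hFcont j j
  have hgsupp : HasCompactSupport (fun x => ∑ j : Fin d, F u j j x) := by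
    apply (hs.fderiv ℝ).mono'
    intro x hx
    apply subset_closure
    simp only [Function.mem_support]
    intro h0
    apply hx
    simp [F, h0]
  have hgfcont : ∀ v : Fin d → ℝ,
      Continuous fun x => fderiv ℝ (fun x => ∑ j : Fin d, F u j j x) x v := by
    intro v
    have heq : (fun x => fderiv ℝ (fun x => ∑ j : Fin d, F u j j x) x v)
        = fun x => ∑ j : Fin d, fderiv ℝ (fderiv ℝ u) x v (Pi.single j 1) j := by
      funext x; rw [hgfderiv]
    rw [heq]
    exact continuous_finset_sum _ fun j _ => hHcont v (Pi.single j 1) j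
  have hgfsupp : ∀ v : Fin d → ℝ,
      HasCompactSupport fun x => fderiv ℝ (fun x => ∑ j : Fin d, F u j j x) x v := by
    intro v
    apply hHsupp.mono'
    intro x hx
    apply subset_closure
    simp only [Function.mem_support] at hx ⊢
    intro h0
    apply hx
    rw [hgfderiv]
    simp [h0]
  -- second integration by parts
  have key2 : ∀ i : Fin d,
      (- ∫ x, fderiv ℝ (fun x => ∑ j : Fin d, F u j j x) x (Pi.single i 1) * u x i)
        = ∫ x, (∑ j : Fin d, F u j j x) * F u i i x := by
    intro i
    have h1 : Integrable (fun x =>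
        fderiv ℝ (fun x => ∑ j : Fin d, F u j j x) x (Pi.single i 1) * u x i) :=
      ((hgfcont (Pi.single i 1)).mul (hucont i)).integrable_of_hasCompactSupport
        ((hgfsupp (Pi.single i 1)).mul_right)
    have h2 : Integrable (fun x =>
        (∑ j : Fin d, F u j j x) * fderiv ℝ (fun y => u y i) x (Pi.single i 1)) := by
      have hc : Continuous fun x =>
          (∑ j : Fin d, F u j j x) * fderiv ℝ (fun y => u y i) x (Pi.single i 1) := by
        simp only [hucomp]
        exact hgcont.mul (hFcont i i)
      exact hc.integrable_of_hasCompactSupport (hgsupp.mul_right)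
    have h3 : Integrable (fun x => (∑ j : Fin d, F u j j x) * u x i) :=
      (hgcont.mul (hucont i)).integrable_of_hasCompactSupport (hgsupp.mul_right)
    have h := integral_mul_fderiv_eq_neg_fderiv_mul_of_integrable
      (f := fun x => ∑ j : Fin d, F u j j x) (g := fun y => u y i) (v := Pi.single i 1)
      h1 h2 h3 (fun x _ => hgdiff x) (fun x _ => hudiff i x)
    have hl : (fun x => (∑ j : Fin d, F u j j x) * fderiv ℝ (fun y => u y i) x (Pi.single i 1))
        = fun x => (∑ j : Fin d, F u j j x) * F u i i x := by
      funext x; rw [hucomp]; rfl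
    rw [hl] at h
    linarith [h]
  -- put everything together
  have hFFint : ∀ i j : Fin d, Integrable (fun x => F u i j x * F u j i x) := fun i j =>
    ((hFcont i j).mul (hFcont j i)).integrable_of_hasCompactSupport ((hFsupp i j).mul_right)
  have hHuint : ∀ i j : Fin d,
      Integrable (fun x =>
        fderiv ℝ (fderiv ℝ u) x (Pi.single i 1) (Pi.single j 1) j * u x i) := fun i j =>
    ((hHcont (Pi.single i 1) (Pi.single j 1) j).mul (hucont i)).integrable_of_hasCompactSupport
      ((hHsupp' (Pi.single i 1) (Pi.single j 1) j).mul_right)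
  have hsplit : (∫ x, ∑ i : Fin d, ∑ j : Fin d, F u i j x * F u j i x)
      = ∑ i : Fin d, ∑ j : Fin d, ∫ x, F u i j x * F u j i x := by
    rw [integral_finset_sum]
    · exact Finset.sum_congr rfl fun i _ => integral_finset_sum _ (fun j _ => hFFint i j)
    · exact fun i _ => integrable_finset_sum _ (fun j _ => hFFint i j)
  rw [hsplit]
  have hstep : ∀ i : Fin d, (∑ j : Fin d, ∫ x, F u i j x * F u j i x)
      = ∫ x, (∑ j : Fin d, F u j j x) * F u i i x := by
    intro i
    have step1 : (∑ j : Fin d, ∫ x, F u i j x * F u j i x)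
        = - ∫ x, (∑ j : Fin d, fderiv ℝ (fderiv ℝ u) x (Pi.single i 1) (Pi.single j 1) j)
            * u x i := by
      have e1 : (∑ j : Fin d, ∫ x, F u i j x * F u j i x)
          = ∑ j : Fin d, - ∫ x,
              fderiv ℝ (fderiv ℝ u) x (Pi.single i 1) (Pi.single j 1) j * u x i :=
        Finset.sum_congr rfl fun j _ => key i j
      rw [e1, Finset.sum_neg_distrib]
      congr 1
      rw [← integral_finset_sum _ (fun j _ => hHuint i j)]
      congr 1
      funext x
      rw [Finset.sum_mul]
    rw [step1]
    have e2 : (fun x => (∑ j : Fin d, fderiv ℝ (fderiv ℝ u) x (Pi.single i 1) (Pi.single j 1) j)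
          * u x i)
        = fun x => fderiv ℝ (fun x => ∑ j : Fin d, F u j j x) x (Pi.single i 1) * u x i := by
      funext x; rw [hgfderiv]
    rw [e2]
    exact key2 i
  rw [Finset.sum_congr rfl fun i _ => hstep i]
  have hgFint : ∀ i : Fin d, Integrable (fun x => (∑ j : Fin d, F u j j x) * F u i i x) :=
    fun i => (hgcont.mul (hFcont i i)).integrable_of_hasCompactSupport (hgsupp.mul_right)
  rw [← integral_finset_sum _ (fun i _ => hgFint i)]
  have e3 : (fun x => ∑ i : Fin d, (∑ j : Fin d, F u j j x) * F u i i x)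
      = fun x => (∑ j : Fin d, F u j j x) * (∑ i : Fin d, F u i i x) := by
    funext x
    rw [← Finset.mul_sum]
  rw [e3]
  apply integral_nonneg
  intro x
  exact mul_self_nonneg _

end Stmt7Aux


open Stmt7Aux

set_option maxHeartbeats 2000000

/-- Coercivity of the bilinear form `a` of the stationary one-step problem:
with `(∇u)_{ij} = ∂u_j/∂x_i = fderiv ℝ u x (Pi.single i 1) j`, `Du = ∇u + (∇u)ᵀ`,
`α, β, γ, ν^δ ≥ 0`, `ν^f > 0`, a Poincaré inequality `∫_Ω |u|² ≤ C_Ω² ∫_Ω ‖∇u‖²`, and `u`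
a `C²` vector field with compact support contained in the interior of `Ω`, one has
`a(u,u) ≥ (ν^f/(C_Ω²+1)) ‖u‖_{1,Ω}²` where `‖u‖_{1,Ω}² = ∫_Ω |u|² + ∫_Ω ‖∇u‖²`. -/
theorem stmt7
    (d : ℕ) (hd : 0 < d)
    (Ω Ωs ΩX : Set (Fin d → ℝ))
    (hΩm : MeasurableSet Ω) (hΩsm : MeasurableSet Ωs) (hΩXm : MeasurableSet ΩX)
    (hΩs : Ωs ⊆ Ω) (hΩX : ΩX ⊆ Ω)
    (u : (Fin d → ℝ) → (Fin d → ℝ))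
    (hu : ContDiff ℝ 2 u) (hsupp : HasCompactSupport u)
    (hsuppΩ : tsupport u ⊆ interior Ω)
    (α β γ νδ νf CΩ : ℝ)
    (hα : 0 ≤ α) (hβ : 0 ≤ β) (hγ : 0 ≤ γ) (hνδ : 0 ≤ νδ) (hνf : 0 < νf) (hCΩ : 0 < CΩ)
    (hPoincare :
      (∫ x in Ω, ∑ i : Fin d, u x i ^ 2)
        ≤ CΩ ^ 2 * ∫ x in Ω, ∑ i : Fin d, ∑ j : Fin d,
            (fderiv ℝ u x (Pi.single i (1:ℝ)) j) ^ 2) :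
    α * (∫ x in Ω, ∑ i : Fin d, u x i ^ 2)
      + νf / 2 * (∫ x in Ω, ∑ i : Fin d, ∑ j : Fin d,
          (fderiv ℝ u x (Pi.single i (1:ℝ)) j + fderiv ℝ u x (Pi.single j (1:ℝ)) i) ^ 2)
      + β * (∫ x in Ωs, ∑ i : Fin d, u x i ^ 2)
      + νδ / 2 * (∫ x in Ωs, ∑ i : Fin d, ∑ j : Fin d,
          (fderiv ℝ u x (Pi.single i (1:ℝ)) j + fderiv ℝ u x (Pi.single j (1:ℝ)) i) ^ 2)
      + γ * (∫ x in ΩX, ∑ i : Fin d, ∑ j : Fin d,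
          (fderiv ℝ u x (Pi.single i (1:ℝ)) j) ^ 2)
    ≥ νf / (CΩ ^ 2 + 1) *
        ((∫ x in Ω, ∑ i : Fin d, u x i ^ 2)
          + ∫ x in Ω, ∑ i : Fin d, ∑ j : Fin d,
              (fderiv ℝ u x (Pi.single i (1:ℝ)) j) ^ 2) := by
  classical
  have hfd : ContDiff ℝ 1 (fderiv ℝ u) := hu.fderiv_right (by norm_num)
  have hFcont : ∀ i j : Fin d, Continuous fun x => fderiv ℝ u x (Pi.single i 1) j := fun i j =>
    (continuous_apply j).comp
      ((ContinuousLinearMap.apply ℝ (Fin d → ℝ) (Pi.single i 1)).continuous.comp hfd.continuous)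
  -- vanishing outside Ω
  have hvanish : ∀ x, x ∉ Ω → fderiv ℝ u x = 0 := by
    intro x hx
    by_contra h0
    exact hx (interior_subset (hsuppΩ (support_fderiv_subset ℝ h0)))
  -- the three auxiliary integrands
  set f2 : (Fin d → ℝ) → ℝ := fun x => ∑ i : Fin d, ∑ j : Fin d,
      (fderiv ℝ u x (Pi.single i 1) j) ^ 2 with hf2def
  set fc : (Fin d → ℝ) → ℝ := fun x => ∑ i : Fin d, ∑ j : Fin d,
      fderiv ℝ u x (Pi.single i 1) j * fderiv ℝ u x (Pi.single j 1) i with hfcdef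
  set fD : (Fin d → ℝ) → ℝ := fun x => ∑ i : Fin d, ∑ j : Fin d,
      (fderiv ℝ u x (Pi.single i 1) j + fderiv ℝ u x (Pi.single j 1) i) ^ 2 with hfDdef
  have hf2cont : Continuous f2 := continuous_finset_sum _ fun i _ =>
    continuous_finset_sum _ fun j _ => (hFcont i j).pow 2
  have hfccont : Continuous fc := continuous_finset_sum _ fun i _ =>
    continuous_finset_sum _ fun j _ => (hFcont i j).mul (hFcont j i)
  have hfDcont : Continuous fD := continuous_finset_sum _ fun i _ =>
    continuous_finset_sum _ fun j _ => ((hFcont i j).add (hFcont j i)).pow 2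
  have hsupp2 : ∀ f : (Fin d → ℝ) → ℝ,
      (∀ x, fderiv ℝ u x = 0 → f x = 0) → HasCompactSupport f := by
    intro f hf
    apply (hsupp.fderiv ℝ).mono'
    intro x hx
    apply subset_closure
    simp only [Function.mem_support]
    intro h0
    exact hx (hf x h0)
  have hf2supp : HasCompactSupport f2 := hsupp2 _ (fun x h0 => by simp [hf2def, h0])
  have hfcsupp : HasCompactSupport fc := hsupp2 _ (fun x h0 => by simp [hfcdef, h0])
  have hfDsupp : HasCompactSupport fD := hsupp2 _ (fun x h0 => by simp [hfDdef, h0])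
  have hf2int : Integrable f2 := hf2cont.integrable_of_hasCompactSupport hf2supp
  have hfcint : Integrable fc := hfccont.integrable_of_hasCompactSupport hfcsupp
  -- pointwise identity
  have hpt : ∀ x, fD x = 2 * f2 x + 2 * fc x := by
    intro x
    have e1 : ∀ i j : Fin d, (fderiv ℝ u x (Pi.single i 1) j + fderiv ℝ u x (Pi.single j 1) i) ^ 2
        = (fderiv ℝ u x (Pi.single i 1) j) ^ 2 + (fderiv ℝ u x (Pi.single j 1) i) ^ 2
          + 2 * (fderiv ℝ u x (Pi.single i 1) j * fderiv ℝ u x (Pi.single j 1) i) :=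
      fun i j => by ring
    have e2 : ∑ i : Fin d, ∑ j : Fin d, (fderiv ℝ u x (Pi.single j 1) i) ^ 2
        = ∑ i : Fin d, ∑ j : Fin d, (fderiv ℝ u x (Pi.single i 1) j) ^ 2 := Finset.sum_comm
    simp only [hfDdef, hf2def, hfcdef, e1, Finset.sum_add_distrib, ← Finset.mul_sum]
    rw [e2]
    ring
  -- set-integral splitting
  have hDD : (∫ x in Ω, fD x) = 2 * (∫ x in Ω, f2 x) + 2 * ∫ x in Ω, fc x := by
    have : (∫ x in Ω, fD x) = ∫ x in Ω, (2 * f2 x + 2 * fc x) := by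
      apply setIntegral_congr_fun hΩm
      intro x _
      exact hpt x
    rw [this, integral_add ((hf2int.const_mul 2).integrableOn) ((hfcint.const_mul 2).integrableOn),
      integral_const_mul, integral_const_mul]
  -- the cross term is nonnegative (Korn)
  have hcross : 0 ≤ ∫ x in Ω, fc x := by
    have heq : (∫ x in Ω, fc x) = ∫ x, fc x := by
      apply setIntegral_eq_integral_of_forall_compl_eq_zero
      intro x hx
      simp [hfcdef, hvanish x hx]
    rw [heq]
    have hk := korn u hu hsupp
    simpa [F, hfcdef] using hk
  -- nonnegativity of the various terms
  have hA0 : 0 ≤ ∫ x in Ω, ∑ i : Fin d, u x i ^ 2 :=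
    setIntegral_nonneg hΩm fun x _ => by positivity
  have hB0 : 0 ≤ ∫ x in Ω, f2 x := setIntegral_nonneg hΩm fun x _ => by positivity
  have ht3 : 0 ≤ ∫ x in Ωs, ∑ i : Fin d, u x i ^ 2 :=
    setIntegral_nonneg hΩsm fun x _ => by positivity
  have ht4 : 0 ≤ ∫ x in Ωs, fD x := setIntegral_nonneg hΩsm fun x _ => by positivity
  have ht5 : 0 ≤ ∫ x in ΩX, f2 x := setIntegral_nonneg hΩXm fun x _ => by positivity
  -- final arithmetic
  set A := ∫ x in Ω, ∑ i : Fin d, u x i ^ 2 with hAdef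
  set B := ∫ x in Ω, f2 x with hBdef
  have hAB : A ≤ CΩ ^ 2 * B := hPoincare
  have h1 : A + B ≤ (CΩ ^ 2 + 1) * B := by nlinarith
  have hc : νf / (CΩ ^ 2 + 1) * (A + B) ≤ νf * B := by
    calc νf / (CΩ ^ 2 + 1) * (A + B)
        ≤ νf / (CΩ ^ 2 + 1) * ((CΩ ^ 2 + 1) * B) := by
          apply mul_le_mul_of_nonneg_left h1 (by positivity)
      _ = νf * B := by
          field_simp
  have hDDge : νf * B ≤ νf / 2 * ∫ x in Ω, fD x := by
    rw [hDD]
    nlinarith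
  have hβ3 : 0 ≤ β * ∫ x in Ωs, ∑ i : Fin d, u x i ^ 2 := mul_nonneg hβ ht3
  have hν4 : 0 ≤ νδ / 2 * ∫ x in Ωs, fD x := mul_nonneg (by positivity) ht4
  have hγ5 : 0 ≤ γ * ∫ x in ΩX, f2 x := mul_nonneg hγ ht5
  have hαA : 0 ≤ α * A := mul_nonneg hα hA0
  linarith
end

section
/- Let d be a positive integer, let Ω ⊂ ℝ^d be a measurable set, and let Ω^s ⊆ Ω and Ω_X ⊆ Ω be measurable subsets. Let u, v : ℝ^d → ℝ^d be continuously differentiable with compact support contained in Ω, and let α ≥ 0, β ≥ 0, γ ≥ 0, ν^f ≥ 0, ν^δ ≥ 0. Define a(u,v) := α∫_Ω u·v + (ν^f/2)∫_Ω Du : Dv + β∫_{Ω^s} u·v + (ν^δ/2)∫_{Ω^s} Du : Dv + γ∫_{Ω_X} ∇u : ∇v. Then |a(u,v)| ≤ (α + β + 2ν^f + 2ν^δ + γ) ‖u‖_{1,Ω} ‖v‖_{1,Ω}, where ‖u‖_{1,Ω}² = ∫_Ω |u|² + ∫_Ω ‖∇u‖². -/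
open MeasureTheory

private lemma cs_general {X : Type*} [MeasurableSpace X] (μ : Measure X) {ι : Type*} [Fintype ι]
    (f g : ι → X → ℝ)
    (hff : Integrable (fun x => ∑ i, f i x ^ 2) μ)
    (hgg : Integrable (fun x => ∑ i, g i x ^ 2) μ)
    (hfg : Integrable (fun x => ∑ i, f i x * g i x) μ) :
    |∫ x, ∑ i, f i x * g i x ∂μ| ≤
      Real.sqrt (∫ x, ∑ i, f i x ^ 2 ∂μ) * Real.sqrt (∫ x, ∑ i, g i x ^ 2 ∂μ) := by
  set A := ∫ x, ∑ i, f i x ^ 2 ∂μ with hAdef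
  set B := ∫ x, ∑ i, g i x ^ 2 ∂μ with hBdef
  set C := ∫ x, ∑ i, f i x * g i x ∂μ with hCdef
  have hA : 0 ≤ A := integral_nonneg fun x => Finset.sum_nonneg fun i _ => sq_nonneg _
  have hB : 0 ≤ B := integral_nonneg fun x => Finset.sum_nonneg fun i _ => sq_nonneg _
  have hq : ∀ t : ℝ, 0 ≤ A * (t * t) + (2 * C) * t + B := by
    intro t
    have h2 : 0 ≤ ∫ x, ((t * t) * (∑ i, f i x ^ 2) + (2 * t) * (∑ i, f i x * g i x)
        + (∑ i, g i x ^ 2)) ∂μ := by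
      refine integral_nonneg fun x => ?_
      simp only [Pi.zero_apply]
      have h1 : (t * t) * (∑ i, f i x ^ 2) + (2 * t) * (∑ i, f i x * g i x)
          + (∑ i, g i x ^ 2) = ∑ i, (t * f i x + g i x) ^ 2 := by
        rw [Finset.mul_sum, Finset.mul_sum, ← Finset.sum_add_distrib, ← Finset.sum_add_distrib]
        exact Finset.sum_congr rfl fun i _ => by ring
      rw [h1]
      exact Finset.sum_nonneg fun i _ => sq_nonneg _
    have i1 : Integrable (fun x => (t * t) * ∑ i, f i x ^ 2) μ := hff.const_mul _
    have i2 : Integrable (fun x => (2 * t) * ∑ i, f i x * g i x) μ := hfg.const_mul _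
    have e1 := integral_add (i1.add i2) hgg
    have e2 := integral_add i1 i2
    simp only [Pi.add_apply] at e1 e2
    rw [e1, e2, integral_const_mul, integral_const_mul] at h2
    nlinarith [h2]
  have hd := discrim_le_zero hq
  rw [discrim] at hd
  have hC2 : C ^ 2 ≤ A * B := by nlinarith
  calc |C| = Real.sqrt (C ^ 2) := (Real.sqrt_sq_eq_abs C).symm
    _ ≤ Real.sqrt (A * B) := Real.sqrt_le_sqrt hC2
    _ = Real.sqrt A * Real.sqrt B := Real.sqrt_mul hA B

private lemma cs_general2 {X : Type*} [MeasurableSpace X] (μ : Measure X)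
    {ι κ : Type*} [Fintype ι] [Fintype κ] (f g : ι → κ → X → ℝ)
    (hff : Integrable (fun x => ∑ i, ∑ j, f i j x ^ 2) μ)
    (hgg : Integrable (fun x => ∑ i, ∑ j, g i j x ^ 2) μ)
    (hfg : Integrable (fun x => ∑ i, ∑ j, f i j x * g i j x) μ) :
    |∫ x, ∑ i, ∑ j, f i j x * g i j x ∂μ| ≤
      Real.sqrt (∫ x, ∑ i, ∑ j, f i j x ^ 2 ∂μ)
        * Real.sqrt (∫ x, ∑ i, ∑ j, g i j x ^ 2 ∂μ) := by
  have h := cs_general μ (fun p : ι × κ => f p.1 p.2) (fun p : ι × κ => g p.1 p.2)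
    (by simpa [Fintype.sum_prod_type] using hff)
    (by simpa [Fintype.sum_prod_type] using hgg)
    (by simpa [Fintype.sum_prod_type] using hfg)
  simpa [Fintype.sum_prod_type] using h

private lemma aux_intOn_sum {d : ℕ} {ι : Type*} [Fintype ι] (f g : ι → (Fin d → ℝ) → ℝ)
    (hf : ∀ i, Continuous (f i)) (hg : ∀ i, Continuous (g i))
    (hcf : ∀ i, HasCompactSupport (f i)) (S : Set (Fin d → ℝ)) :
    IntegrableOn (fun x => ∑ i, f i x * g i x) S := by
  refine (integrable_finset_sum (f := fun i x => f i x * g i x) Finset.univ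
    fun i _ => ?_).integrableOn
  exact ((hf i).mul (hg i)).integrable_of_hasCompactSupport ((hcf i).mul_right)

private lemma aux_intOn_sq {d : ℕ} {ι : Type*} [Fintype ι] (f : ι → (Fin d → ℝ) → ℝ)
    (hf : ∀ i, Continuous (f i)) (hcf : ∀ i, HasCompactSupport (f i)) (S : Set (Fin d → ℝ)) :
    IntegrableOn (fun x => ∑ i, f i x ^ 2) S := by
  simpa [pow_two] using aux_intOn_sum f f hf hf hcf S

private lemma aux_intOn_sum2 {d : ℕ} {ι κ : Type*} [Fintype ι] [Fintype κ]
    (f g : ι → κ → (Fin d → ℝ) → ℝ)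
    (hf : ∀ i j, Continuous (f i j)) (hg : ∀ i j, Continuous (g i j))
    (hcf : ∀ i j, HasCompactSupport (f i j)) (S : Set (Fin d → ℝ)) :
    IntegrableOn (fun x => ∑ i, ∑ j, f i j x * g i j x) S := by
  have := aux_intOn_sum (fun p : ι × κ => f p.1 p.2) (fun p : ι × κ => g p.1 p.2)
    (fun p => hf p.1 p.2) (fun p => hg p.1 p.2) (fun p => hcf p.1 p.2) S
  simpa [Fintype.sum_prod_type] using this

private lemma aux_intOn_sq2 {d : ℕ} {ι κ : Type*} [Fintype ι] [Fintype κ]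
    (f : ι → κ → (Fin d → ℝ) → ℝ)
    (hf : ∀ i j, Continuous (f i j)) (hcf : ∀ i j, HasCompactSupport (f i j))
    (S : Set (Fin d → ℝ)) :
    IntegrableOn (fun x => ∑ i, ∑ j, f i j x ^ 2) S := by
  simpa [pow_two] using aux_intOn_sum2 f f hf hf hcf S

/-- Boundedness (continuity) of the bilinear form `a` of the stationary
one-step problem: with `(∇u)_{ij} = ∂u_j/∂x_i = fderiv ℝ u x (Pi.single i 1) j`,
`Du = ∇u + (∇u)ᵀ`, Frobenius inner products written as double sums, and
`‖u‖_{1,Ω} = (∫_Ω |u|² + ∫_Ω ‖∇u‖²)^{1/2}`, one has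
`|a(u,v)| ≤ (α + β + 2ν^f + 2ν^δ + γ) ‖u‖_{1,Ω} ‖v‖_{1,Ω}`. -/
theorem stmt8
    (d : ℕ) (hd : 0 < d)
    (Ω Ωs ΩX : Set (Fin d → ℝ))
    (hΩm : MeasurableSet Ω) (hΩsm : MeasurableSet Ωs) (hΩXm : MeasurableSet ΩX)
    (hΩs : Ωs ⊆ Ω) (hΩX : ΩX ⊆ Ω)
    (u v : (Fin d → ℝ) → (Fin d → ℝ))
    (hu : ContDiff ℝ 1 u) (hv : ContDiff ℝ 1 v)
    (husupp : HasCompactSupport u) (hvsupp : HasCompactSupport v)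
    (husuppΩ : tsupport u ⊆ Ω) (hvsuppΩ : tsupport v ⊆ Ω)
    (α β γ νf νδ : ℝ)
    (hα : 0 ≤ α) (hβ : 0 ≤ β) (hγ : 0 ≤ γ) (hνf : 0 ≤ νf) (hνδ : 0 ≤ νδ) :
    |α * (∫ x in Ω, ∑ i : Fin d, u x i * v x i)
      + νf / 2 * (∫ x in Ω, ∑ i : Fin d, ∑ j : Fin d,
          (fderiv ℝ u x (Pi.single i (1:ℝ)) j + fderiv ℝ u x (Pi.single j (1:ℝ)) i)
            * (fderiv ℝ v x (Pi.single i (1:ℝ)) j + fderiv ℝ v x (Pi.single j (1:ℝ)) i))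
      + β * (∫ x in Ωs, ∑ i : Fin d, u x i * v x i)
      + νδ / 2 * (∫ x in Ωs, ∑ i : Fin d, ∑ j : Fin d,
          (fderiv ℝ u x (Pi.single i (1:ℝ)) j + fderiv ℝ u x (Pi.single j (1:ℝ)) i)
            * (fderiv ℝ v x (Pi.single i (1:ℝ)) j + fderiv ℝ v x (Pi.single j (1:ℝ)) i))
      + γ * (∫ x in ΩX, ∑ i : Fin d, ∑ j : Fin d,
          (fderiv ℝ u x (Pi.single i (1:ℝ)) j) * (fderiv ℝ v x (Pi.single i (1:ℝ)) j))|
    ≤ (α + β + 2 * νf + 2 * νδ + γ)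
        * Real.sqrt ((∫ x in Ω, ∑ i : Fin d, u x i ^ 2)
            + ∫ x in Ω, ∑ i : Fin d, ∑ j : Fin d, (fderiv ℝ u x (Pi.single i (1:ℝ)) j) ^ 2)
        * Real.sqrt ((∫ x in Ω, ∑ i : Fin d, v x i ^ 2)
            + ∫ x in Ω, ∑ i : Fin d, ∑ j : Fin d, (fderiv ℝ v x (Pi.single i (1:ℝ)) j) ^ 2) := by
  -- basic continuity/support facts
  have hU : Continuous u := hu.continuous
  have hV : Continuous v := hv.continuous
  have hui : ∀ i, Continuous fun x => u x i := fun i => (continuous_apply i).comp hU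
  have hvi : ∀ i, Continuous fun x => v x i := fun i => (continuous_apply i).comp hV
  have huci : ∀ i, HasCompactSupport fun x => u x i := by
    intro i
    apply husupp.comp_left (g := fun y : Fin d → ℝ => y i)
    simp
  have hvci : ∀ i, HasCompactSupport fun x => v x i := by
    intro i
    apply hvsupp.comp_left (g := fun y : Fin d → ℝ => y i)
    simp
  have hdu : Continuous (fderiv ℝ u) := by exact hu.continuous_fderiv one_ne_zero
  have hdv : Continuous (fderiv ℝ v) := by exact hv.continuous_fderiv one_ne_zero
  have hduc : HasCompactSupport (fderiv ℝ u) := HasCompactSupport.fderiv (𝕜 := ℝ) husupp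
  have hdvc : HasCompactSupport (fderiv ℝ v) := HasCompactSupport.fderiv (𝕜 := ℝ) hvsupp
  have hduij : ∀ i j, Continuous fun x => fderiv ℝ u x (Pi.single i (1:ℝ)) j :=
    fun i j => (continuous_apply j).comp (hdu.clm_apply continuous_const)
  have hdvij : ∀ i j, Continuous fun x => fderiv ℝ v x (Pi.single i (1:ℝ)) j :=
    fun i j => (continuous_apply j).comp (hdv.clm_apply continuous_const)
  have hducij : ∀ i j, HasCompactSupport fun x => fderiv ℝ u x (Pi.single i (1:ℝ)) j := by
    intro i j
    apply hduc.comp_left (g := fun L : (Fin d → ℝ) →L[ℝ] (Fin d → ℝ) => L (Pi.single i (1:ℝ)) j)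
    simp
  have hdvcij : ∀ i j, HasCompactSupport fun x => fderiv ℝ v x (Pi.single i (1:ℝ)) j := by
    intro i j
    apply hdvc.comp_left (g := fun L : (Fin d → ℝ) →L[ℝ] (Fin d → ℝ) => L (Pi.single i (1:ℝ)) j)
    simp
  -- symmetrized gradient components
  have hDuij : ∀ i j, Continuous fun x =>
      fderiv ℝ u x (Pi.single i (1:ℝ)) j + fderiv ℝ u x (Pi.single j (1:ℝ)) i :=
    fun i j => (hduij i j).add (hduij j i)
  have hDvij : ∀ i j, Continuous fun x =>
      fderiv ℝ v x (Pi.single i (1:ℝ)) j + fderiv ℝ v x (Pi.single j (1:ℝ)) i :=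
    fun i j => (hdvij i j).add (hdvij j i)
  have hDucij : ∀ i j, HasCompactSupport fun x =>
      fderiv ℝ u x (Pi.single i (1:ℝ)) j + fderiv ℝ u x (Pi.single j (1:ℝ)) i :=
    fun i j => (hducij i j).add (hducij j i)
  have hDvcij : ∀ i j, HasCompactSupport fun x =>
      fderiv ℝ v x (Pi.single i (1:ℝ)) j + fderiv ℝ v x (Pi.single j (1:ℝ)) i :=
    fun i j => (hdvcij i j).add (hdvcij j i)
  set NU := Real.sqrt ((∫ x in Ω, ∑ i : Fin d, u x i ^ 2)
      + ∫ x in Ω, ∑ i : Fin d, ∑ j : Fin d, (fderiv ℝ u x (Pi.single i (1:ℝ)) j) ^ 2)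
    with hNUdef
  set NV := Real.sqrt ((∫ x in Ω, ∑ i : Fin d, v x i ^ 2)
      + ∫ x in Ω, ∑ i : Fin d, ∑ j : Fin d, (fderiv ℝ v x (Pi.single i (1:ℝ)) j) ^ 2)
    with hNVdef
  have hIu0 : 0 ≤ ∫ x in Ω, ∑ i : Fin d, u x i ^ 2 :=
    integral_nonneg fun x => Finset.sum_nonneg fun i _ => sq_nonneg _
  have hIv0 : 0 ≤ ∫ x in Ω, ∑ i : Fin d, v x i ^ 2 :=
    integral_nonneg fun x => Finset.sum_nonneg fun i _ => sq_nonneg _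
  have hIu1 : 0 ≤ ∫ x in Ω, ∑ i : Fin d, ∑ j : Fin d, (fderiv ℝ u x (Pi.single i (1:ℝ)) j) ^ 2 :=
    integral_nonneg fun x => Finset.sum_nonneg fun i _ =>
      Finset.sum_nonneg fun j _ => sq_nonneg _
  have hIv1 : 0 ≤ ∫ x in Ω, ∑ i : Fin d, ∑ j : Fin d, (fderiv ℝ v x (Pi.single i (1:ℝ)) j) ^ 2 :=
    integral_nonneg fun x => Finset.sum_nonneg fun i _ =>
      Finset.sum_nonneg fun j _ => sq_nonneg _
  -- sqrt bounds for the pieces over Ω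
  have hsq_u0 : Real.sqrt (∫ x in Ω, ∑ i : Fin d, u x i ^ 2) ≤ NU :=
    Real.sqrt_le_sqrt (by linarith)
  have hsq_v0 : Real.sqrt (∫ x in Ω, ∑ i : Fin d, v x i ^ 2) ≤ NV :=
    Real.sqrt_le_sqrt (by linarith)
  have hsq_u1 : Real.sqrt (∫ x in Ω, ∑ i : Fin d, ∑ j : Fin d,
      (fderiv ℝ u x (Pi.single i (1:ℝ)) j) ^ 2) ≤ NU :=
    Real.sqrt_le_sqrt (by linarith)
  have hsq_v1 : Real.sqrt (∫ x in Ω, ∑ i : Fin d, ∑ j : Fin d,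
      (fderiv ℝ v x (Pi.single i (1:ℝ)) j) ^ 2) ≤ NV :=
    Real.sqrt_le_sqrt (by linarith)
  -- subset monotonicity for nonnegative square integrands
  have hmono_u0 : (∫ x in Ωs, ∑ i : Fin d, u x i ^ 2) ≤ ∫ x in Ω, ∑ i : Fin d, u x i ^ 2 :=
    setIntegral_mono_set (aux_intOn_sq _ hui huci Ω)
      (Filter.Eventually.of_forall fun x => Finset.sum_nonneg fun i _ => sq_nonneg _)
      hΩs.eventuallyLE
  have hmono_v0 : (∫ x in Ωs, ∑ i : Fin d, v x i ^ 2) ≤ ∫ x in Ω, ∑ i : Fin d, v x i ^ 2 :=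
    setIntegral_mono_set (aux_intOn_sq _ hvi hvci Ω)
      (Filter.Eventually.of_forall fun x => Finset.sum_nonneg fun i _ => sq_nonneg _)
      hΩs.eventuallyLE
  -- pointwise bound: ‖Du‖² ≤ 4 ‖∇u‖²
  have hpt : ∀ (w : (Fin d → ℝ) → (Fin d → ℝ)) (x : Fin d → ℝ),
      (∑ i : Fin d, ∑ j : Fin d,
        (fderiv ℝ w x (Pi.single i (1:ℝ)) j + fderiv ℝ w x (Pi.single j (1:ℝ)) i) ^ 2)
      ≤ 4 * ∑ i : Fin d, ∑ j : Fin d, (fderiv ℝ w x (Pi.single i (1:ℝ)) j) ^ 2 := by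
    intro w x
    have h1 : (∑ i : Fin d, ∑ j : Fin d,
        (fderiv ℝ w x (Pi.single i (1:ℝ)) j + fderiv ℝ w x (Pi.single j (1:ℝ)) i) ^ 2)
        ≤ ∑ i : Fin d, ∑ j : Fin d,
          (2 * (fderiv ℝ w x (Pi.single i (1:ℝ)) j) ^ 2
            + 2 * (fderiv ℝ w x (Pi.single j (1:ℝ)) i) ^ 2) :=
      Finset.sum_le_sum fun i _ => Finset.sum_le_sum fun j _ => by
        nlinarith [sq_nonneg (fderiv ℝ w x (Pi.single i (1:ℝ)) j
          - fderiv ℝ w x (Pi.single j (1:ℝ)) i)]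
    have h2 : (∑ i : Fin d, ∑ j : Fin d,
        (2 * (fderiv ℝ w x (Pi.single i (1:ℝ)) j) ^ 2
          + 2 * (fderiv ℝ w x (Pi.single j (1:ℝ)) i) ^ 2))
        = 4 * ∑ i : Fin d, ∑ j : Fin d, (fderiv ℝ w x (Pi.single i (1:ℝ)) j) ^ 2 := by
      simp only [Finset.sum_add_distrib, ← Finset.mul_sum]
      rw [Finset.sum_comm (f := fun i j => (fderiv ℝ w x (Pi.single j (1:ℝ)) i) ^ 2)]
      ring
    linarith
  -- integral bounds for the symmetrized gradients
  have hsym : ∀ (S : Set (Fin d → ℝ)), S ⊆ Ω →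
      ∀ (w : (Fin d → ℝ) → (Fin d → ℝ)),
      (∀ i j, Continuous fun x => fderiv ℝ w x (Pi.single i (1:ℝ)) j) →
      (∀ i j, HasCompactSupport fun x => fderiv ℝ w x (Pi.single i (1:ℝ)) j) →
      (∫ x in S, ∑ i : Fin d, ∑ j : Fin d,
        (fderiv ℝ w x (Pi.single i (1:ℝ)) j + fderiv ℝ w x (Pi.single j (1:ℝ)) i) ^ 2)
      ≤ 4 * ∫ x in Ω, ∑ i : Fin d, ∑ j : Fin d, (fderiv ℝ w x (Pi.single i (1:ℝ)) j) ^ 2 := by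
    intro S hS w hwc hws
    have hint1 : IntegrableOn (fun x => ∑ i : Fin d, ∑ j : Fin d,
        (fderiv ℝ w x (Pi.single i (1:ℝ)) j + fderiv ℝ w x (Pi.single j (1:ℝ)) i) ^ 2) Ω :=
      aux_intOn_sq2 _ (fun i j => (hwc i j).add (hwc j i))
        (fun i j => (hws i j).add (hws j i)) Ω
    have step1 : (∫ x in S, ∑ i : Fin d, ∑ j : Fin d,
        (fderiv ℝ w x (Pi.single i (1:ℝ)) j + fderiv ℝ w x (Pi.single j (1:ℝ)) i) ^ 2)
        ≤ ∫ x in Ω, ∑ i : Fin d, ∑ j : Fin d,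
          (fderiv ℝ w x (Pi.single i (1:ℝ)) j + fderiv ℝ w x (Pi.single j (1:ℝ)) i) ^ 2 :=
      setIntegral_mono_set hint1
        (Filter.Eventually.of_forall fun x => Finset.sum_nonneg fun i _ =>
          Finset.sum_nonneg fun j _ => sq_nonneg _)
        hS.eventuallyLE
    have step2 : (∫ x in Ω, ∑ i : Fin d, ∑ j : Fin d,
        (fderiv ℝ w x (Pi.single i (1:ℝ)) j + fderiv ℝ w x (Pi.single j (1:ℝ)) i) ^ 2)
        ≤ 4 * ∫ x in Ω, ∑ i : Fin d, ∑ j : Fin d,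
          (fderiv ℝ w x (Pi.single i (1:ℝ)) j) ^ 2 := by
      rw [← integral_const_mul]
      exact integral_mono hint1 ((aux_intOn_sq2 _ hwc hws Ω).const_mul 4) (hpt w)
    linarith
  -- sqrt bound: ‖Du‖_{L²(S)} ≤ 2 NU
  have hsqrt4 : ∀ t s : ℝ, 0 ≤ s → t ≤ 4 * s → Real.sqrt t ≤ 2 * Real.sqrt s := by
    intro t s hs ht
    calc Real.sqrt t ≤ Real.sqrt (4 * s) := Real.sqrt_le_sqrt ht
      _ = 2 * Real.sqrt s := by
        rw [show (4 : ℝ) * s = 2 ^ 2 * s by ring, Real.sqrt_mul (by positivity) s,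
          Real.sqrt_sq (by norm_num)]
  have hsymU : ∀ (S : Set (Fin d → ℝ)), S ⊆ Ω →
      Real.sqrt (∫ x in S, ∑ i : Fin d, ∑ j : Fin d,
        (fderiv ℝ u x (Pi.single i (1:ℝ)) j + fderiv ℝ u x (Pi.single j (1:ℝ)) i) ^ 2)
      ≤ 2 * NU := by
    intro S hS
    have h1 := hsym S hS u hduij hducij
    exact hsqrt4 _ _ (by linarith) (by linarith)
  have hsymV : ∀ (S : Set (Fin d → ℝ)), S ⊆ Ω →
      Real.sqrt (∫ x in S, ∑ i : Fin d, ∑ j : Fin d,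
        (fderiv ℝ v x (Pi.single i (1:ℝ)) j + fderiv ℝ v x (Pi.single j (1:ℝ)) i) ^ 2)
      ≤ 2 * NV := by
    intro S hS
    have h1 := hsym S hS v hdvij hdvcij
    exact hsqrt4 _ _ (by linarith) (by linarith)
  -- the five term bounds
  have b1 : |∫ x in Ω, ∑ i : Fin d, u x i * v x i| ≤ NU * NV := by
    refine (cs_general (volume.restrict Ω) (fun i x => u x i) (fun i x => v x i)
      (aux_intOn_sq _ hui huci Ω) (aux_intOn_sq _ hvi hvci Ω)
      (aux_intOn_sum _ _ hui hvi huci Ω)).trans ?_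
    exact mul_le_mul hsq_u0 hsq_v0 (Real.sqrt_nonneg _) (Real.sqrt_nonneg _)
  have b3 : |∫ x in Ωs, ∑ i : Fin d, u x i * v x i| ≤ NU * NV := by
    refine (cs_general (volume.restrict Ωs) (fun i x => u x i) (fun i x => v x i)
      (aux_intOn_sq _ hui huci Ωs) (aux_intOn_sq _ hvi hvci Ωs)
      (aux_intOn_sum _ _ hui hvi huci Ωs)).trans ?_
    refine mul_le_mul ((Real.sqrt_le_sqrt hmono_u0).trans hsq_u0)
      ((Real.sqrt_le_sqrt hmono_v0).trans hsq_v0) (Real.sqrt_nonneg _) (Real.sqrt_nonneg _)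
  have b2 : ∀ (S : Set (Fin d → ℝ)), S ⊆ Ω →
      |∫ x in S, ∑ i : Fin d, ∑ j : Fin d,
        (fderiv ℝ u x (Pi.single i (1:ℝ)) j + fderiv ℝ u x (Pi.single j (1:ℝ)) i)
          * (fderiv ℝ v x (Pi.single i (1:ℝ)) j + fderiv ℝ v x (Pi.single j (1:ℝ)) i)|
      ≤ 4 * (NU * NV) := by
    intro S hS
    refine (cs_general2 (volume.restrict S)
      (fun i j x => fderiv ℝ u x (Pi.single i (1:ℝ)) j + fderiv ℝ u x (Pi.single j (1:ℝ)) i)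
      (fun i j x => fderiv ℝ v x (Pi.single i (1:ℝ)) j + fderiv ℝ v x (Pi.single j (1:ℝ)) i)
      (aux_intOn_sq2 _ hDuij hDucij S) (aux_intOn_sq2 _ hDvij hDvcij S)
      (aux_intOn_sum2 _ _ hDuij hDvij hDucij S)).trans ?_
    have := mul_le_mul (hsymU S hS) (hsymV S hS) (Real.sqrt_nonneg _)
      (by positivity)
    nlinarith [this]
  have b5 : |∫ x in ΩX, ∑ i : Fin d, ∑ j : Fin d,
      (fderiv ℝ u x (Pi.single i (1:ℝ)) j) * (fderiv ℝ v x (Pi.single i (1:ℝ)) j)|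
      ≤ NU * NV := by
    refine (cs_general2 (volume.restrict ΩX)
      (fun i j x => fderiv ℝ u x (Pi.single i (1:ℝ)) j)
      (fun i j x => fderiv ℝ v x (Pi.single i (1:ℝ)) j)
      (aux_intOn_sq2 _ hduij hducij ΩX) (aux_intOn_sq2 _ hdvij hdvcij ΩX)
      (aux_intOn_sum2 _ _ hduij hdvij hducij ΩX)).trans ?_
    have hmu : (∫ x in ΩX, ∑ i : Fin d, ∑ j : Fin d,
        (fderiv ℝ u x (Pi.single i (1:ℝ)) j) ^ 2)
        ≤ ∫ x in Ω, ∑ i : Fin d, ∑ j : Fin d, (fderiv ℝ u x (Pi.single i (1:ℝ)) j) ^ 2 :=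
      setIntegral_mono_set (aux_intOn_sq2 _ hduij hducij Ω)
        (Filter.Eventually.of_forall fun x => Finset.sum_nonneg fun i _ =>
          Finset.sum_nonneg fun j _ => sq_nonneg _) hΩX.eventuallyLE
    have hmv : (∫ x in ΩX, ∑ i : Fin d, ∑ j : Fin d,
        (fderiv ℝ v x (Pi.single i (1:ℝ)) j) ^ 2)
        ≤ ∫ x in Ω, ∑ i : Fin d, ∑ j : Fin d, (fderiv ℝ v x (Pi.single i (1:ℝ)) j) ^ 2 :=
      setIntegral_mono_set (aux_intOn_sq2 _ hdvij hdvcij Ω)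
        (Filter.Eventually.of_forall fun x => Finset.sum_nonneg fun i _ =>
          Finset.sum_nonneg fun j _ => sq_nonneg _) hΩX.eventuallyLE
    exact mul_le_mul ((Real.sqrt_le_sqrt hmu).trans hsq_u1)
      ((Real.sqrt_le_sqrt hmv).trans hsq_v1) (Real.sqrt_nonneg _) (Real.sqrt_nonneg _)
  have b2Ω := b2 Ω le_rfl
  have b2Ωs := b2 Ωs hΩs
  have hνf2 : (0:ℝ) ≤ νf / 2 := by linarith
  have hνδ2 : (0:ℝ) ≤ νδ / 2 := by linarith
  -- assemble
  calc |α * (∫ x in Ω, ∑ i : Fin d, u x i * v x i)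
      + νf / 2 * (∫ x in Ω, ∑ i : Fin d, ∑ j : Fin d,
          (fderiv ℝ u x (Pi.single i (1:ℝ)) j + fderiv ℝ u x (Pi.single j (1:ℝ)) i)
            * (fderiv ℝ v x (Pi.single i (1:ℝ)) j + fderiv ℝ v x (Pi.single j (1:ℝ)) i))
      + β * (∫ x in Ωs, ∑ i : Fin d, u x i * v x i)
      + νδ / 2 * (∫ x in Ωs, ∑ i : Fin d, ∑ j : Fin d,
          (fderiv ℝ u x (Pi.single i (1:ℝ)) j + fderiv ℝ u x (Pi.single j (1:ℝ)) i)
            * (fderiv ℝ v x (Pi.single i (1:ℝ)) j + fderiv ℝ v x (Pi.single j (1:ℝ)) i))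
      + γ * (∫ x in ΩX, ∑ i : Fin d, ∑ j : Fin d,
          (fderiv ℝ u x (Pi.single i (1:ℝ)) j) * (fderiv ℝ v x (Pi.single i (1:ℝ)) j))|
      ≤ |α * (∫ x in Ω, ∑ i : Fin d, u x i * v x i)|
        + |νf / 2 * (∫ x in Ω, ∑ i : Fin d, ∑ j : Fin d,
          (fderiv ℝ u x (Pi.single i (1:ℝ)) j + fderiv ℝ u x (Pi.single j (1:ℝ)) i)
            * (fderiv ℝ v x (Pi.single i (1:ℝ)) j + fderiv ℝ v x (Pi.single j (1:ℝ)) i))|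
        + |β * (∫ x in Ωs, ∑ i : Fin d, u x i * v x i)|
        + |νδ / 2 * (∫ x in Ωs, ∑ i : Fin d, ∑ j : Fin d,
          (fderiv ℝ u x (Pi.single i (1:ℝ)) j + fderiv ℝ u x (Pi.single j (1:ℝ)) i)
            * (fderiv ℝ v x (Pi.single i (1:ℝ)) j + fderiv ℝ v x (Pi.single j (1:ℝ)) i))|
        + |γ * (∫ x in ΩX, ∑ i : Fin d, ∑ j : Fin d,
          (fderiv ℝ u x (Pi.single i (1:ℝ)) j) * (fderiv ℝ v x (Pi.single i (1:ℝ)) j))| :=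
      (abs_add_le _ _).trans (add_le_add ((abs_add_le _ _).trans (add_le_add ((abs_add_le _ _).trans
        (add_le_add (abs_add_le _ _) le_rfl)) le_rfl)) le_rfl)
    _ ≤ α * (NU * NV) + νf / 2 * (4 * (NU * NV)) + β * (NU * NV)
        + νδ / 2 * (4 * (NU * NV)) + γ * (NU * NV) := by
      simp only [abs_mul, abs_of_nonneg hα, abs_of_nonneg hβ, abs_of_nonneg hγ,
        abs_of_nonneg hνf2, abs_of_nonneg hνδ2]
      exact add_le_add (add_le_add (add_le_add (add_le_add
        (mul_le_mul_of_nonneg_left b1 hα) (mul_le_mul_of_nonneg_left b2Ω hνf2))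
        (mul_le_mul_of_nonneg_left b3 hβ)) (mul_le_mul_of_nonneg_left b2Ωs hνδ2))
        (mul_le_mul_of_nonneg_left b5 hγ)
    _ = (α + β + 2 * νf + 2 * νδ + γ) * NU * NV := by ring
end
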